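/- The Mallows–Riordan polynomials satisfy J̃_{n+1}(-1) = J_{n+1}(-1) = A_n for all n ≥ 0, where A_n is the n-th zigzag number, as a consequence of the identity cos z/(1 - sin z) = (1 + sin z)/cos z. -/

import Mathlib

open Polynomial MeasureTheory

/-- Mallows–Riordan polynomials `J n`, via the Kreweras recursion
`J (n+2) = ∑_{i=0}^n C(n,i) (1+θ+⋯+θ^i) J (i+1) J (n+1-i)`, `J 1 = 1`. -/
noncomputable def MRJ : ℕ → Polynomial ℚ
  | 0 => 0
  | 1 => 1
  | n + 2 =>
      ∑ i ∈ (Finset.range (n + 1)).attach,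
        (n.choose i.1 : Polynomial ℚ) * (∑ j ∈ Finset.range (i.1 + 1), X ^ j) *
          MRJ (i.1 + 1) * MRJ (n + 1 - i.1)
  decreasing_by
  · have := Finset.mem_range.mp i.2; omega
  · omega

/-- The modified polynomials `J̃ n`, determined by `J̃ 1 = 1` and the formal power
series identity `∑ J̃ (n+1) z^n/n! = (∑ (-1)^n J (n+1) z^n/n!)⁻¹`, equivalently the
recursion `J̃ (n+1) = ∑_{k=1}^n (-1)^{k-1} C(n,k) J (k+1) J̃ (n+1-k)`. -/
noncomputable def MRJt : ℕ → Polynomial ℚ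
  | 0 => 0
  | 1 => 1
  | n + 2 =>
      ∑ k ∈ (Finset.Icc 1 (n + 1)).attach,
        (-1 : Polynomial ℚ) ^ (k.1 - 1) * ((n + 1).choose k.1 : Polynomial ℚ) *
          MRJ (k.1 + 1) * MRJt (n + 2 - k.1)
  decreasing_by
  have := (Finset.mem_Icc.mp k.2).1; omega

/-- Euler zigzag numbers, as the Taylor coefficients at `0` of `sec z + tan z`. -/
noncomputable def zigzag (n : ℕ) : ℝ :=
  iteratedDeriv n (fun z : ℝ => (1 + Real.sin z) / Real.cos z) 0

/-!
Let `f = sec + tan = (1 + sin) / cos`, so that `A n` is the `n`-th derivative of `f` at `0`.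
The identity `cos z / (1 - sin z) = (1 + sin z) / cos z` says `f (-z) * f z = 1`, and then
`f' = (1 + f ^ 2) / 2 = (f (-z) * f z + f z * f z) / 2`. Taking `n` derivatives at `0` with
Leibniz's rule gives `∑ (-1)^k C(n,k) A k A (n-k) = [n = 0]` and
`A (n+1) = ∑ C(n,i) (1 + (-1)^i)/2 A i A (n-i)`. At `θ = -1` the factor `1 + θ + ⋯ + θ^i` of the
Kreweras recursion is `(1 + (-1)^i)/2`, so `J (n+1) (-1) = A n`; the first identity says that
`∑ A n z^n/n!` is the inverse of `∑ (-1)^n A n z^n/n!`, which is the recursion defining `J̃`,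
so also `J̃ (n+1) (-1) = A n`.
-/

open Finset Filter Topology

noncomputable def secAddTan (z : ℝ) : ℝ := (1 + Real.sin z) / Real.cos z

lemma zigzag_eq_iteratedDeriv_secAddTan (n : ℕ) : zigzag n = iteratedDeriv n secAddTan 0 := rfl

lemma zigzag_zero : zigzag 0 = 1 := by
  simp [zigzag]

lemma contDiffAt_secAddTan {x : ℝ} (hx : Real.cos x ≠ 0) {n : WithTop ℕ∞} :
    ContDiffAt ℝ n secAddTan x :=
  (contDiffAt_const.add Real.contDiff_sin.contDiffAt).div Real.contDiff_cos.contDiffAt hx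

lemma secAddTan_neg_mul_secAddTan {x : ℝ} (hx : Real.cos x ≠ 0) :
    secAddTan (-x) * secAddTan x = 1 := by
  simp only [secAddTan, Real.sin_neg, Real.cos_neg]
  field_simp
  linear_combination (-1) * Real.sin_sq_add_cos_sq x

lemma hasDerivAt_secAddTan {x : ℝ} (hx : Real.cos x ≠ 0) :
    HasDerivAt secAddTan ((secAddTan (-x) * secAddTan x + secAddTan x * secAddTan x) / 2) x := by
  refine (((Real.hasDerivAt_sin x).const_add 1).div (Real.hasDerivAt_cos x) hx).congr_deriv ?_
  simp only [secAddTan, Real.sin_neg, Real.cos_neg]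
  field_simp
  linear_combination 2 * Real.sin_sq_add_cos_sq x

lemma eventually_cos_ne_zero : ∀ᶠ z in 𝓝 (0 : ℝ), Real.cos z ≠ 0 :=
  Real.continuous_cos.continuousAt.eventually_ne (by simp)

lemma contDiffAt_secAddTan_zero {n : WithTop ℕ∞} : ContDiffAt ℝ n secAddTan 0 :=
  contDiffAt_secAddTan (by simp)

lemma contDiffAt_secAddTan_neg_zero {n : WithTop ℕ∞} :
    ContDiffAt ℝ n (fun z => secAddTan (-z)) 0 :=
  (contDiffAt_secAddTan (x := -0) (by simp)).comp 0 contDiff_neg.contDiffAt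

lemma iteratedDeriv_secAddTan_neg_mul_secAddTan (n : ℕ) :
    iteratedDeriv n (fun z => secAddTan (-z) * secAddTan z) 0 =
      ∑ k ∈ range (n + 1), (-1) ^ k * n.choose k * zigzag k * zigzag (n - k) := by
  rw [iteratedDeriv_fun_mul contDiffAt_secAddTan_neg_zero contDiffAt_secAddTan_zero]
  refine sum_congr rfl fun k _ => ?_
  rw [iteratedDeriv_comp_neg, neg_zero, smul_eq_mul, zigzag_eq_iteratedDeriv_secAddTan,
    zigzag_eq_iteratedDeriv_secAddTan]
  ring

lemma sum_neg_one_pow_mul_zigzag (n : ℕ) :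
    ∑ k ∈ range (n + 1), (-1) ^ k * n.choose k * zigzag k * zigzag (n - k) =
      if n = 0 then 1 else 0 := by
  have h : (fun z => secAddTan (-z) * secAddTan z) =ᶠ[𝓝 0] fun _ => 1 :=
    eventually_cos_ne_zero.mono fun z hz => secAddTan_neg_mul_secAddTan hz
  rw [← iteratedDeriv_secAddTan_neg_mul_secAddTan, h.iteratedDeriv_eq, iteratedDeriv_const]

lemma zigzag_succ (n : ℕ) :
    zigzag (n + 1) = ∑ i ∈ range (n + 1),
      n.choose i * (∑ j ∈ range (i + 1), (-1) ^ j) * zigzag i * zigzag (n - i) := by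
  have h : deriv secAddTan =ᶠ[𝓝 0]
      fun z => (secAddTan (-z) * secAddTan z + secAddTan z * secAddTan z) / 2 :=
    eventually_cos_ne_zero.mono fun z hz => (hasDerivAt_secAddTan hz).deriv
  rw [zigzag_eq_iteratedDeriv_secAddTan, iteratedDeriv_succ', h.iteratedDeriv_eq,
    iteratedDeriv_div_const, iteratedDeriv_fun_add
      (contDiffAt_secAddTan_neg_zero.mul contDiffAt_secAddTan_zero)
      (contDiffAt_secAddTan_zero.mul contDiffAt_secAddTan_zero),
    iteratedDeriv_secAddTan_neg_mul_secAddTan,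
    iteratedDeriv_fun_mul contDiffAt_secAddTan_zero contDiffAt_secAddTan_zero,
    ← sum_add_distrib, sum_div]
  refine sum_congr rfl fun i _ => ?_
  -- `1 - 1 + ⋯ + (-1)^i = (1 + (-1)^i) / 2`
  have hgeom := geom_sum_mul (-1 : ℝ) (i + 1)
  rw [← zigzag_eq_iteratedDeriv_secAddTan, ← zigzag_eq_iteratedDeriv_secAddTan]
  linear_combination ((n.choose i : ℝ) * zigzag i * zigzag (n - i) / 2) * hgeom

lemma zigzag_succ_eq_sum_Icc (n : ℕ) :
    zigzag (n + 1) = ∑ k ∈ Icc 1 (n + 1),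
      (-1) ^ (k - 1) * (n + 1).choose k * zigzag k * zigzag (n + 1 - k) := by
  have h := sum_neg_one_pow_mul_zigzag (n + 1)
  rw [sum_range_eq_add_Ico _ (by omega : 0 < n + 1 + 1), Ico_add_one_right_eq_Icc 1 (n + 1)] at h
  have hsign : ∀ k ∈ Icc 1 (n + 1),
      (-1 : ℝ) ^ (k - 1) * (n + 1).choose k * zigzag k * zigzag (n + 1 - k) =
        -((-1) ^ k * (n + 1).choose k * zigzag k * zigzag (n + 1 - k)) := by
    intro k hk
    obtain ⟨j, rfl⟩ := Nat.exists_eq_add_of_le' (mem_Icc.1 hk).1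
    rw [Nat.add_sub_cancel, pow_succ]
    ring
  rw [sum_congr rfl hsign, sum_neg_distrib]
  simp only [pow_zero, Nat.choose_zero_right, Nat.cast_one, zigzag_zero, Nat.sub_zero,
    one_mul, Nat.add_eq_zero_iff, one_ne_zero, and_false, if_false] at h
  linarith

lemma eval_neg_one_MRJ_add_two (n : ℕ) :
    (MRJ (n + 2)).eval (-1) = ∑ i ∈ range (n + 1),
      n.choose i * (∑ j ∈ range (i + 1), (-1) ^ j) *
        (MRJ (i + 1)).eval (-1) * (MRJ (n - i + 1)).eval (-1) := by
  rw [MRJ, eval_finsetSum, sum_attach (range (n + 1)) fun i => eval (-1)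
    ((n.choose i : ℚ[X]) * (∑ j ∈ range (i + 1), X ^ j) * MRJ (i + 1) * MRJ (n + 1 - i))]
  refine sum_congr rfl fun i hi => ?_
  rw [show n + 1 - i = n - i + 1 by have := mem_range.1 hi; omega]
  simp only [eval_mul, eval_natCast, eval_finsetSum, eval_pow, eval_X]

lemma eval_neg_one_MRJt_add_two (n : ℕ) :
    (MRJt (n + 2)).eval (-1) = ∑ k ∈ Icc 1 (n + 1),
      (-1) ^ (k - 1) * (n + 1).choose k *
        (MRJ (k + 1)).eval (-1) * (MRJt (n + 1 - k + 1)).eval (-1) := by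
  rw [MRJt, eval_finsetSum, sum_attach (Icc 1 (n + 1)) fun k => eval (-1)
    ((-1 : ℚ[X]) ^ (k - 1) * ((n + 1).choose k : ℚ[X]) * MRJ (k + 1) * MRJt (n + 2 - k))]
  refine sum_congr rfl fun k hk => ?_
  rw [show n + 2 - k = n + 1 - k + 1 by have := mem_Icc.1 hk; omega]
  simp only [eval_mul, eval_natCast, eval_pow, eval_neg, eval_one]

lemma ratCast_eval_neg_one_MRJ (n : ℕ) : (((MRJ (n + 1)).eval (-1) : ℚ) : ℝ) = zigzag n := by
  induction n using Nat.strong_induction_on with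
  | _ n ih =>
    cases n with
    | zero => simp [MRJ, zigzag_zero]
    | succ n =>
      rw [eval_neg_one_MRJ_add_two, zigzag_succ]
      push_cast
      refine sum_congr rfl fun i hi => ?_
      have := mem_range.1 hi
      rw [ih i (by omega), ih (n - i) (by omega)]

lemma ratCast_eval_neg_one_MRJt (n : ℕ) : (((MRJt (n + 1)).eval (-1) : ℚ) : ℝ) = zigzag n := by
  induction n using Nat.strong_induction_on with
  | _ n ih =>
    cases n with
    | zero => simp [MRJt, zigzag_zero]
    | succ n =>
      rw [eval_neg_one_MRJt_add_two, zigzag_succ_eq_sum_Icc]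
      push_cast
      refine sum_congr rfl fun k hk => ?_
      have := (mem_Icc.1 hk).1
      rw [ratCast_eval_neg_one_MRJ, ih (n + 1 - k) (by omega)]

theorem MRJt_eval_neg_one_eq_zigzag (n : ℕ) :
    (MRJt (n + 1)).eval (-1) = (MRJ (n + 1)).eval (-1) ∧
    (((MRJ (n + 1)).eval (-1) : ℚ) : ℝ) = zigzag n := by
  have hJ := ratCast_eval_neg_one_MRJ n
  exact ⟨Rat.cast_injective ((ratCast_eval_neg_one_MRJt n).trans hJ.symm), hJ⟩
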